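/- Let X be an n×n skeletal nilpotent matrix with exactly k nonzero rows, and let H be a Hessenberg space whose Hessenberg function satisfies h(1) = 2. Suppose there exists g ∈ GL(n,ℂ) with g⁻¹ X g ∈ H such that every entry of the first column of g is nonzero (so the first column has pivot in row n). Then every t = diag(t_1,…,t_n) ∈ T such that H(X,H) is {t}-stable satisfies t_i⁻¹ t_{X(i)} = t_{i'}⁻¹ t_{X(i')} for all pairs of nonzero rows i, i' of X; that is, the largest subtorus of T under which H(X,H) is stable is K = {t ∈ T : the ratios t_i⁻¹ t_{X(i)} agree over all nonzero rows i of X}. -/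

import Mathlib

/-- The Hessenberg space of a Hessenberg function `h` (0-based indices). -/
def hessSpace {n : ℕ} (h : Fin n → Fin n) : Set (Matrix (Fin n) (Fin n) ℂ) :=
  {M | ∀ i j : Fin n, h j < i → M i j = 0}

/-- `X` is skeletal nilpotent: strictly upper-triangular with at most one nonzero
entry in each row and each column. -/
def Skeletal {n : ℕ} (X : Matrix (Fin n) (Fin n) ℂ) : Prop :=
  (∀ i j : Fin n, j ≤ i → X i j = 0) ∧
  (∀ i j j' : Fin n, X i j ≠ 0 → X i j' ≠ 0 → j = j') ∧
  (∀ i i' j : Fin n, X i j ≠ 0 → X i' j ≠ 0 → i = i')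

/-!
Iterating stability, `diagonal t ^ m * g` is admissible for every `m`, and
`(diagonal t ^ m)⁻¹ * X * diagonal t ^ m = ∑ c, c ^ m • X_c`, where `X_c` collects the entries
`X a b` with `(t a)⁻¹ * t b = c`. A Vandermonde argument puts each `g⁻¹ * X_c * g` in the
Hessenberg space. As `h 0 = 1`, the first column of `X_c * g` is then a combination of the first
two columns of `g`. These vectors all vanish in the last row, where the first column of `g` does
not, so they are pairwise proportional. If two nonzero rows `i`, `i'` of `X` had different ratios
`c ≠ c'`, the vector for `c` would be nonzero at `i` and zero at `i'`, and the one for `c'` the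
reverse.
-/

open Matrix Finset

/-- `x c` is recovered from the power sums by applying the Lagrange polynomial
`∏_{c' ≠ c} (X - c')`, which kills every other summand. -/
theorem Submodule.mem_of_forall_sum_pow_smul_mem {K M : Type*} [Field K] [AddCommGroup M]
    [Module K M] (V : Submodule K M) {s : Finset K} {x : K → M}
    (hx : ∀ m : ℕ, ∑ c ∈ s, c ^ m • x c ∈ V) {c : K} (hc : c ∈ s) : x c ∈ V := by
  classical
  have heval : ∀ P : Polynomial K, ∑ c ∈ s, P.eval c • x c ∈ V := fun P => by
    simp_rw [Polynomial.eval_eq_sum_range, sum_smul, mul_smul]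
    rw [sum_comm]
    simp_rw [← smul_sum]
    exact V.sum_mem fun m _ => V.smul_mem _ (hx m)
  set P : Polynomial K := ∏ c' ∈ s.erase c, (Polynomial.X - Polynomial.C c')
  have hP : ∀ y, P.eval y = ∏ c' ∈ s.erase c, (y - c') := fun y => by
    simp [P, Polynomial.eval_prod]
  have hPc : P.eval c ≠ 0 := by
    rw [hP]
    exact prod_ne_zero_iff.mpr fun c' hc' => sub_ne_zero.mpr (ne_of_mem_erase hc').symm
  have hsum : ∑ c' ∈ s, P.eval c' • x c' = P.eval c • x c :=
    sum_eq_single_of_mem c hc fun c' hc' hne => by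
      rw [hP, prod_eq_zero (mem_erase.mpr ⟨hne, hc'⟩) (sub_self c'), zero_smul]
  exact (V.smul_mem_iff hPc).mp (hsum ▸ heval P)

theorem inv_diagonal_of_ne_zero {ι K : Type*} [Fintype ι] [DecidableEq ι] [Field K]
    {t : ι → K} (ht : ∀ i, t i ≠ 0) : (diagonal t)⁻¹ = diagonal t⁻¹ :=
  inv_eq_left_inv <| by
    rw [diagonal_mul_diagonal, ← diagonal_one]
    exact congrArg diagonal (funext fun i => inv_mul_cancel₀ (ht i))

theorem Matrix.pow_mul_conj_mem_of_stable {ι R : Type*} [Fintype ι] [DecidableEq ι] [CommRing R]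
    {X D g : Matrix ι ι R} {S : Set (Matrix ι ι R)} (hD : IsUnit D)
    (hstab : ∀ g', IsUnit g' → g'⁻¹ * X * g' ∈ S → (D * g')⁻¹ * X * (D * g') ∈ S)
    (hg : IsUnit g) (hmem : g⁻¹ * X * g ∈ S) (m : ℕ) :
    IsUnit (D ^ m * g) ∧ (D ^ m * g)⁻¹ * X * (D ^ m * g) ∈ S := by
  induction m with
  | zero => simpa using ⟨hg, hmem⟩
  | succ m ih =>
    rw [pow_succ', Matrix.mul_assoc]
    exact ⟨hD.mul ih.1, hstab _ ih.1 ih.2⟩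

section RatioPart

variable {ι K : Type*} [Field K] [DecidableEq K]

/-- The entries of `X` that conjugation by `diagonal t` multiplies by `c`. -/
def ratioPart (X : Matrix ι ι K) (t : ι → K) (c : K) : Matrix ι ι K :=
  Matrix.of fun a b => if (t a)⁻¹ * t b = c then X a b else 0

theorem ratioPart_apply (X : Matrix ι ι K) (t : ι → K) (c : K) (a b : ι) :
    ratioPart X t c a b = if (t a)⁻¹ * t b = c then X a b else 0 := rfl

theorem inv_diagonal_pow_mul_mul_diagonal_pow [Fintype ι] [DecidableEq ι] (X : Matrix ι ι K)
    {t : ι → K} (ht : ∀ i, t i ≠ 0) (m : ℕ) :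
    (diagonal t ^ m)⁻¹ * X * diagonal t ^ m =
      ∑ c ∈ univ.image (fun p : ι × ι => (t p.1)⁻¹ * t p.2), c ^ m • ratioPart X t c := by
  rw [diagonal_pow, inv_diagonal_of_ne_zero fun i => by simpa using pow_ne_zero m (ht i)]
  ext a b
  have hmem : (t a)⁻¹ * t b ∈ univ.image (fun p : ι × ι => (t p.1)⁻¹ * t p.2) :=
    mem_image_of_mem _ (mem_univ (a, b))
  simp only [mul_diagonal, diagonal_mul, Matrix.sum_apply, Matrix.smul_apply, ratioPart_apply,
    smul_eq_mul, mul_ite, mul_zero, Pi.inv_apply, Pi.pow_apply]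
  rw [sum_ite_eq, if_pos hmem, mul_pow, inv_pow]
  ring

theorem ratioPart_mul_apply_of_row [Fintype ι] {X : Matrix ι ι K} {a j : ι}
    (hrow : ∀ j', X a j' ≠ 0 → j' = j) (t : ι → K) (c : K) (g : Matrix ι ι K) (b : ι) :
    (ratioPart X t c * g) a b = ratioPart X t c a j * g j b :=
  Fintype.sum_eq_single j fun j' hj' => by
    dsimp only
    rw [ratioPart_apply, ite_eq_right_iff.mpr fun _ => not_not.mp (mt (hrow j') hj'), zero_mul]

end RatioPart

def hessSubmodule {n : ℕ} (h : Fin n → Fin n) : Submodule ℂ (Matrix (Fin n) (Fin n) ℂ) where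
  carrier := hessSpace h
  add_mem' hM hN i j hij := by simp [hM i j hij, hN i j hij]
  zero_mem' _ _ _ := rfl
  smul_mem' c M hM i j hij := by simp [hM i j hij]

theorem mul_apply_zero_of_conj_mem_hessSpace {m : ℕ} {h : Fin (m + 2) → Fin (m + 2)}
    (h0 : (h 0 : ℕ) ≤ 1) {g M : Matrix (Fin (m + 2)) (Fin (m + 2)) ℂ} (hg : IsUnit g)
    (hM : g⁻¹ * M * g ∈ hessSpace h) (a : Fin (m + 2)) :
    (M * g) a 0 = g a 0 * (g⁻¹ * M * g) 0 0 + g a 1 * (g⁻¹ * M * g) 1 0 := by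
  have hMg : M * g = g * (g⁻¹ * M * g) := by
    rw [← Matrix.mul_assoc, ← Matrix.mul_assoc,
      mul_nonsing_inv g ((isUnit_iff_isUnit_det g).mp hg), Matrix.one_mul]
  rw [hMg, mul_apply, Fin.sum_univ_succ, Fin.sum_univ_succ,
    Fintype.sum_eq_zero _ fun b => by rw [hM _ 0 (by simp [Fin.lt_def]; omega), mul_zero]]
  simp

theorem mul_eq_mul_of_forall_eq_mul_add_mul {ι K : Type*} [Field K] {u w v v' : ι → K} {l : ι}
    (hu : u l ≠ 0) (hv : ∃ A B, ∀ a, v a = u a * A + w a * B)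
    (hv' : ∃ A B, ∀ a, v' a = u a * A + w a * B) (hvl : v l = 0) (hv'l : v' l = 0) (i i' : ι) :
    v i * v' i' = v i' * v' i := by
  obtain ⟨A, B, hv⟩ := hv
  obtain ⟨A', B', hv'⟩ := hv'
  rw [hv] at hvl
  rw [hv'] at hv'l
  simp only [hv, hv']
  have hdet : u l * (A * B' - A' * B) = 0 := by linear_combination B' * hvl - B * hv'l
  replace hdet := (mul_eq_zero.mp hdet).resolve_left hu
  linear_combination (u i * w i' - u i' * w i) * hdet

theorem conj_ratioPart_mem_hessSpace {n : ℕ} {X g : Matrix (Fin n) (Fin n) ℂ}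
    {h : Fin n → Fin n} {t : Fin n → ℂ} (ht : ∀ i, t i ≠ 0)
    (hstab : ∀ g' : Matrix (Fin n) (Fin n) ℂ, IsUnit g' → g'⁻¹ * X * g' ∈ hessSpace h →
      (diagonal t * g')⁻¹ * X * (diagonal t * g') ∈ hessSpace h)
    (hg : IsUnit g) (hmem : g⁻¹ * X * g ∈ hessSpace h) {c : ℂ}
    (hc : c ∈ univ.image (fun p : Fin n × Fin n => (t p.1)⁻¹ * t p.2)) :
    g⁻¹ * ratioPart X t c * g ∈ hessSpace h := by
  have hD : IsUnit (diagonal t) := isUnit_diagonal.mpr (Pi.isUnit_iff.mpr fun i => (ht i).isUnit)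
  set V := (hessSubmodule h).comap (LinearMap.mulLeft ℂ g⁻¹ ∘ₗ LinearMap.mulRight ℂ g)
  have hV : ∀ M, M ∈ V ↔ g⁻¹ * M * g ∈ hessSpace h := fun M => by
    rw [Submodule.mem_comap, Matrix.mul_assoc]
    rfl
  refine (hV _).mp (V.mem_of_forall_sum_pow_smul_mem (fun k => (hV _).mpr ?_) hc)
  have hk := (Matrix.pow_mul_conj_mem_of_stable hD hstab hg hmem k).2
  rw [Matrix.mul_inv_rev] at hk
  rw [← inv_diagonal_pow_mul_mul_diagonal_pow X ht k]
  simpa only [Matrix.mul_assoc] using hk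

theorem stmt16 {n : ℕ} (hn : 2 ≤ n)
    (X : Matrix (Fin n) (Fin n) ℂ) (hX : Skeletal X)
    (h : Fin n → Fin n)
    (h1 : (h ⟨0, by omega⟩ : ℕ) = 1)
    (g : Matrix (Fin n) (Fin n) ℂ) (hg : IsUnit g)
    (hmem : g⁻¹ * X * g ∈ hessSpace h)
    (hcol : ∀ i : Fin n, g i ⟨0, by omega⟩ ≠ 0)
    (t : Fin n → ℂ) (ht : ∀ i, t i ≠ 0)
    (hstab : ∀ g' : Matrix (Fin n) (Fin n) ℂ, IsUnit g' →
      g'⁻¹ * X * g' ∈ hessSpace h →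
      (Matrix.diagonal t * g')⁻¹ * X * (Matrix.diagonal t * g') ∈ hessSpace h) :
    ∀ i i' j j' : Fin n, X i j ≠ 0 → X i' j' ≠ 0 →
      (t i)⁻¹ * t j = (t i')⁻¹ * t j' := by
  intro i i' j j' hij hij'
  obtain ⟨m, rfl⟩ : ∃ m, n = m + 2 := ⟨n - 2, by omega⟩
  replace hcol : ∀ a, g a 0 ≠ 0 := hcol
  have hspan : ∀ a b, ∃ A B, ∀ a',
      (ratioPart X t ((t a)⁻¹ * t b) * g) a' 0 = g a' 0 * A + g a' 1 * B := fun a b =>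
    ⟨_, _, mul_apply_zero_of_conj_mem_hessSpace h1.le hg <|
      conj_ratioPart_mem_hessSpace ht hstab hg hmem (mem_image_of_mem _ (mem_univ (a, b)))⟩
  have hlast : ∀ c, (ratioPart X t c * g) (Fin.last _) 0 = 0 := fun c => by
    simp [mul_apply, ratioPart_apply, hX.1 _ _ (Fin.le_last _)]
  have hprop := mul_eq_mul_of_forall_eq_mul_add_mul (u := fun a => g a 0) (hcol (Fin.last _))
    (hspan i j) (hspan i' j') (hlast _) (hlast _) i i'
  simp only [ratioPart_mul_apply_of_row (fun _ h' => hX.2.1 i _ j h' hij),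
    ratioPart_mul_apply_of_row (fun _ h' => hX.2.1 i' _ j' h' hij')] at hprop
  by_contra hne
  simp [ratioPart_apply, hne, Ne.symm hne, hij, hij', hcol] at hprop
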